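/- arXiv:1409.1851 — 5 statements merged into one kernel-verified Lean document; each statement's English description precedes it below -/
import Mathlib

section
/- For 1 ≤ m < d and real numbers φ₁,…,φ_d, the product cos φ₁ ⋯ cos φ_m · sin φ_{m+1} ⋯ sin φ_d equals 2^{−d} times the sum over all sign sequences (s₁,…,s_m) ∈ {−1,1}^m of the iterated integral over σ_{m+1} ∈ [−φ_{m+1}, φ_{m+1}], …, σ_d ∈ [−φ_d, φ_d] of cos(s₁φ₁ + ⋯ + s_mφ_m + σ_{m+1} + ⋯ + σ_d). -/
/-!
Integrating `cos (c + σ)` over `σ ∈ [-a, a]` gives `2 sin a · cos c`, so the iterated integrals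
contribute `2^k ∏ sin ψⱼ` and leave `cos` of the signed sum. The sum over sign patterns of
`exp (i ∑ sᵢ φᵢ)` factors as `∏ (e^{iφᵢ} + e^{-iφᵢ}) = ∏ 2 cos φᵢ`; taking real parts gives the
remaining factor `2^m ∏ cos φᵢ`.
-/

open Real MeasureTheory

/-- Iterated interval integral of a function of the sum of the variables. -/
noncomputable def iterIntSum : List ℝ → (ℝ → ℝ) → ℝ
  | [], f => f 0
  | a :: as, f => ∫ σ in (-a)..a, iterIntSum as (fun t => f (σ + t))

theorem integral_neg_self_cos_add (a c : ℝ) :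
    ∫ σ in (-a)..a, cos (c + σ) = 2 * sin a * cos c := by
  rw [intervalIntegral.integral_comp_add_left, integral_cos, sin_add, sin_add, sin_neg, cos_neg]
  ring

theorem iterIntSum_cos_add (L : List ℝ) (c : ℝ) :
    iterIntSum L (fun t => cos (c + t)) = 2 ^ L.length * (L.map sin).prod * cos c := by
  induction L generalizing c with
  | nil => simp [iterIntSum]
  | cons a as ih =>
    simp only [iterIntSum, ← add_assoc, ih, intervalIntegral.integral_const_mul,
      integral_neg_self_cos_add, List.length_cons, List.map_cons, List.prod_cons]
    ring

theorem sum_exp_sum_sign_mul_mul_I {ι : Type*} [Fintype ι] [DecidableEq ι] (φ : ι → ℝ) :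
    ∑ s : ι → Bool, Complex.exp ((∑ i, (if s i then (1 : ℝ) else -1) * φ i : ℝ) * Complex.I)
      = (2 ^ Fintype.card ι * ∏ i, cos (φ i) : ℝ) := by
  calc _ = ∑ s : ι → Bool,
          ∏ i, Complex.exp (((if s i then (1 : ℝ) else -1) * φ i : ℝ) * Complex.I) := by
        simp only [Complex.ofReal_sum, Finset.sum_mul, Complex.exp_sum]
    _ = ∏ i, ∑ b : Bool, Complex.exp (((if b then (1 : ℝ) else -1) * φ i : ℝ) * Complex.I) :=
        (Fintype.prod_sum fun i (b : Bool) =>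
          Complex.exp (((if b then (1 : ℝ) else -1) * φ i : ℝ) * Complex.I)).symm
    _ = _ := by
        push_cast
        rw [← Finset.card_univ, Finset.pow_card_mul_prod]
        simp [Complex.two_cos, neg_mul]

theorem sum_cos_add_sum_sign_mul {ι : Type*} [Fintype ι] [DecidableEq ι] (φ : ι → ℝ) (c : ℝ) :
    ∑ s : ι → Bool, cos (c + ∑ i, (if s i then (1 : ℝ) else -1) * φ i)
      = 2 ^ Fintype.card ι * (∏ i, cos (φ i)) * cos c := by
  have key := congrArg (fun z => (Complex.exp (c * Complex.I) * z).re)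
    (sum_exp_sum_sign_mul_mul_I φ)
  simpa only [Finset.mul_sum, ← Complex.exp_add, ← add_mul, ← Complex.ofReal_add, Complex.re_sum,
    Complex.exp_ofReal_mul_I_re, Complex.re_mul_ofReal, mul_comm (cos c)] using key

theorem prod_cos_mul_prod_sin_eq_sum_integral_general (m k : ℕ)
    (φ : Fin m → ℝ) (ψ : Fin k → ℝ) :
    (∏ i, Real.cos (φ i)) * ∏ j, Real.sin (ψ j)
      = (1 / 2 ^ (m + k)) * ∑ s : Fin m → Bool,
          iterIntSum (List.ofFn ψ)
            (fun t => Real.cos ((∑ i, (if s i then (1 : ℝ) else -1) * φ i) + t)) := by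
  have h_integral (c : ℝ) :
      iterIntSum (List.ofFn ψ) (fun t => cos (c + t)) = 2 ^ k * (∏ j, sin (ψ j)) * cos c := by
    simp [iterIntSum_cos_add, List.map_ofFn, List.prod_ofFn, Function.comp_def]
  have h_signs : ∑ s : Fin m → Bool, cos (∑ i, (if s i then (1 : ℝ) else -1) * φ i)
      = 2 ^ m * ∏ i, cos (φ i) := by
    simpa using sum_cos_add_sum_sign_mul φ 0
  simp only [h_integral, ← Finset.mul_sum, h_signs]
  field_simp
  ring

theorem prod_cos_mul_prod_sin_eq_sum_integral (m k : ℕ) (hm : 1 ≤ m) (hk : 1 ≤ k)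
    (φ : Fin m → ℝ) (ψ : Fin k → ℝ) :
    (∏ i, Real.cos (φ i)) * ∏ j, Real.sin (ψ j)
      = (1 / 2 ^ (m + k)) * ∑ s : Fin m → Bool,
          iterIntSum (List.ofFn ψ)
            (fun t => Real.cos ((∑ i, (if s i then (1 : ℝ) else -1) * φ i) + t)) :=
  prod_cos_mul_prod_sin_eq_sum_integral_general m k φ ψ
end

section
/- For every integer m ≥ 2, real α > 0, and real numbers x₁, …, x_m, the iterated integral of |x₁ + y₂ + ⋯ + y_m|^α over y₂ ∈ [−x₂, x₂], …, y_m ∈ [−x_m, x_m] equals 1/((α+1)⋯(α+m−1)) times the sum over all sign choices s₂,…,s_m ∈ {−1,+1} of s₂⋯s_m · (x₁ + s₂x₂ + ⋯ + s_mx_m)^{m−1} |x₁ + s₂x₂ + ⋯ + s_mx_m|^α. -/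
/-!
If `F (j + 1)` is an antiderivative of `F j` for every `j`, then integrating `F 0 (c + ·)` over
`[-a, a]` gives `F 1 (c + a) - F 1 (c - a)`, and iterating, the `k`-fold integral is the signed
sum of `F k` over the `2^k` corners `c ± x₁ ± ⋯ ± xₖ`. For `|y| ^ α` such a chain is
`F j y = y ^ j * |y| ^ α / ((α + 1) ⋯ (α + j))`, since `y ^ (j + 1) * |y| ^ α` has derivative
`(α + 1 + j) * y ^ j * |y| ^ α`, also at `0` when `0 ≤ α`.
-/

open Real MeasureTheory

theorem hasDerivAt_pow_succ_mul_abs_rpow_of_ne_zero (α : ℝ) (n : ℕ) {y : ℝ} (hy : y ≠ 0) :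
    HasDerivAt (fun y : ℝ => y ^ (n + 1) * |y| ^ α) ((α + 1 + n) * (y ^ n * |y| ^ α)) y := by
  have habs := (hasDerivAt_abs hy).rpow_const (p := α) (Or.inl (abs_ne_zero.2 hy))
  refine ((hasDerivAt_pow (n + 1) y).mul habs).congr_deriv ?_
  have hy' : y * SignType.sign y * |y| ^ (α - 1) = |y| ^ α := by
    rw [self_mul_sign, Real.rpow_sub (abs_pos.2 hy), Real.rpow_one]
    field_simp
  simp only [add_tsub_cancel_right, Nat.cast_add, Nat.cast_one]
  linear_combination (α * y ^ n) * hy'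

theorem hasDerivAt_pow_succ_mul_abs_rpow {α : ℝ} (hα : 0 ≤ α) (n : ℕ) (y : ℝ) :
    HasDerivAt (fun y : ℝ => y ^ (n + 1) * |y| ^ α) ((α + 1 + n) * (y ^ n * |y| ^ α)) y := by
  have hcont : ∀ m : ℕ, Continuous fun y : ℝ => y ^ m * |y| ^ α := fun m =>
    (continuous_pow m).mul (continuous_abs.rpow_const fun _ => Or.inr hα)
  exact hasDerivAt_of_hasDerivAt_of_ne' (x := 0)
    (fun z hz => hasDerivAt_pow_succ_mul_abs_rpow_of_ne_zero α n hz)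
    (hcont _).continuousAt (continuous_const.mul (hcont n)).continuousAt y

noncomputable def iteratedAntiderivAbsRpow (α : ℝ) (j : ℕ) (y : ℝ) : ℝ :=
  y ^ j * |y| ^ α / ∏ i ∈ Finset.range j, (α + 1 + i)

theorem iteratedAntiderivAbsRpow_zero (α : ℝ) :
    iteratedAntiderivAbsRpow α 0 = fun y => |y| ^ α := by
  ext y
  simp [iteratedAntiderivAbsRpow]

theorem hasDerivAt_iteratedAntiderivAbsRpow {α : ℝ} (hα : 0 ≤ α) (j : ℕ) (y : ℝ) :
    HasDerivAt (iteratedAntiderivAbsRpow α (j + 1)) (iteratedAntiderivAbsRpow α j y) y := by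
  have hprod : ∏ i ∈ Finset.range j, (α + 1 + i) ≠ 0 :=
    Finset.prod_ne_zero_iff.2 fun i _ => by positivity
  have hlast : α + 1 + j ≠ 0 := by positivity
  refine ((hasDerivAt_pow_succ_mul_abs_rpow hα j y).div_const _).congr_deriv ?_
  rw [iteratedAntiderivAbsRpow, Finset.prod_range_succ]
  field_simp

noncomputable def boolSign (b : Bool) : ℝ := if b then 1 else -1

@[simp] theorem boolSign_true : boolSign true = 1 := rfl

@[simp] theorem boolSign_false : boolSign false = -1 := rfl

theorem Fintype.sum_fin_succ_pi {β M : Type*} [Fintype β] [AddCommMonoid M] {k : ℕ}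
    (f : (Fin (k + 1) → β) → M) : ∑ s, f s = ∑ b, ∑ s, f (Fin.cons b s) := by
  rw [← (Fin.consEquiv fun _ => β).sum_comp, Fintype.sum_prod_type]
  rfl

theorem iterIntSum_eq_sum_boolSign {F : ℕ → ℝ → ℝ} (hF₀ : Continuous (F 0))
    (hF : ∀ j y, HasDerivAt (F (j + 1)) (F j y) y) (k : ℕ) (x : Fin k → ℝ) (c : ℝ) :
    iterIntSum (List.ofFn x) (fun t => F 0 (c + t)) =
      ∑ s : Fin k → Bool, (∏ i, boolSign (s i)) * F k (c + ∑ i, boolSign (s i) * x i) := by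
  have hcont : ∀ j, Continuous (F j)
    | 0 => hF₀
    | j + 1 => continuous_iff_continuousAt.2 fun y => (hF j y).continuousAt
  have hintegral : ∀ j d a, ∫ σ in (-a)..a, F j (σ + d) = F (j + 1) (a + d) - F (j + 1) (-a + d) :=
    fun j d a => intervalIntegral.integral_eq_sub_of_hasDerivAt
      (fun σ _ => (hF j (σ + d)).comp_add_const σ d)
      (((hcont j).comp (continuous_add_const d)).intervalIntegrable _ _)
  induction k generalizing c with
  | zero => simp [iterIntSum]
  | succ k ih =>
    have hinner : ∀ σ, iterIntSum (List.ofFn fun i => x i.succ) (fun t => F 0 (c + (σ + t))) =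
        ∑ s : Fin k → Bool, (∏ i, boolSign (s i)) *
          F k (σ + (c + ∑ i, boolSign (s i) * x i.succ)) := by
      intro σ
      simp_rw [← add_assoc, add_comm c σ]
      exact ih _ _
    simp only [List.ofFn_succ, iterIntSum, hinner]
    rw [intervalIntegral.integral_finsetSum fun s _ =>
      (((hcont k).comp' (continuous_add_const _)).intervalIntegrable _ _).const_mul _]
    simp only [intervalIntegral.integral_const_mul, hintegral, Fintype.sum_fin_succ_pi,
      Fintype.sum_bool, Fin.prod_univ_succ, Fin.sum_univ_succ, Fin.cons_zero, Fin.cons_succ,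
      boolSign_true, boolSign_false, ← Finset.sum_add_distrib]
    refine Finset.sum_congr rfl fun s _ => ?_
    ring_nf

theorem iterated_integral_abs_rpow_general (k : ℕ) (α : ℝ) (hα : 0 < α)
    (x₁ : ℝ) (x : Fin k → ℝ) :
    iterIntSum (List.ofFn x) (fun t => |x₁ + t| ^ α)
      = (1 / ∏ i ∈ Finset.range k, (α + 1 + i)) *
          ∑ s : Fin k → Bool,
            (∏ i, (if s i then (1 : ℝ) else -1)) *
              ((x₁ + ∑ i, (if s i then (1 : ℝ) else -1) * x i) ^ k *
                |x₁ + ∑ i, (if s i then (1 : ℝ) else -1) * x i| ^ α) := by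
  have hcont : Continuous (iteratedAntiderivAbsRpow α 0) := by
    rw [iteratedAntiderivAbsRpow_zero]
    exact continuous_abs.rpow_const fun _ => Or.inr hα.le
  have h := iterIntSum_eq_sum_boolSign hcont (hasDerivAt_iteratedAntiderivAbsRpow hα.le) k x x₁
  rw [iteratedAntiderivAbsRpow_zero] at h
  rw [h, Finset.mul_sum]
  refine Finset.sum_congr rfl fun s _ => ?_
  simp only [iteratedAntiderivAbsRpow, boolSign]
  ring

theorem iterated_integral_abs_rpow (k : ℕ) (hk : 1 ≤ k) (α : ℝ) (hα : 0 < α)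
    (x₁ : ℝ) (x : Fin k → ℝ) :
    iterIntSum (List.ofFn x) (fun t => |x₁ + t| ^ α)
      = (1 / ∏ i ∈ Finset.range k, (α + 1 + i)) *
          ∑ s : Fin k → Bool,
            (∏ i, (if s i then (1 : ℝ) else -1)) *
              ((x₁ + ∑ i, (if s i then (1 : ℝ) else -1) * x i) ^ k *
                |x₁ + ∑ i, (if s i then (1 : ℝ) else -1) * x i| ^ α) :=
  iterated_integral_abs_rpow_general k α hα x₁ x
end

section
/- For α = 2, as θ → 0+, H₂(θ) / (½ θ² log(1/θ)) → 1, where H₂(θ) = ∑_{n=1}^∞ n^{−3}(1 − cos nθ). -/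
open Real Filter

lemma rpow_neg3 {x : ℝ} (hx : 0 < x) : x ^ (-(3:ℝ)) = 1 / x ^ 3 := by
  rw [Real.rpow_neg hx.le, show (3:ℝ) = ((3:ℕ):ℝ) by norm_num, Real.rpow_natCast, one_div]

lemma summable_cube : Summable (fun n : ℕ => 1 / ((n:ℝ)+1)^3) := by
  have h : Summable (fun n : ℕ => 1 / (n:ℝ)^3) :=
    Real.summable_one_div_nat_pow.mpr (by norm_num)
  have h2 := (summable_nat_add_iff 1).mpr h
  refine h2.congr fun n => ?_
  push_cast
  ring_nf

lemma tail_hasSum (M : ℕ) (hM : 1 ≤ M) :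
    HasSum (fun n : ℕ => (1/2) * (1/((n:ℝ)+M)^2 - 1/((n:ℝ)+M+1)^2)) (1/(2*(M:ℝ)^2)) := by
  have hMpos : (0:ℝ) < M := by exact_mod_cast hM
  have hnonneg : ∀ n : ℕ, 0 ≤ (1/2) * (1/((n:ℝ)+M)^2 - 1/((n:ℝ)+M+1)^2) := by
    intro n
    have h1 : (0:ℝ) < (n:ℝ)+M := by positivity
    have : 1/((n:ℝ)+M+1)^2 ≤ 1/((n:ℝ)+M)^2 := by
      apply one_div_le_one_div_of_le (by positivity)
      nlinarith
    linarith
  rw [hasSum_iff_tendsto_nat_of_nonneg hnonneg]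
  have key : ∀ K : ℕ, ∑ i ∈ Finset.range K, (1/2) * (1/((i:ℝ)+M)^2 - 1/((i:ℝ)+M+1)^2)
      = 1/2 * (1/((0:ℝ)+M)^2) - 1/2 * (1/((K:ℝ)+M)^2) := by
    intro K
    have h := Finset.sum_range_sub' (fun i : ℕ => (1/2) * (1/((i:ℝ)+M)^2)) K
    push_cast at h
    rw [← h]
    apply Finset.sum_congr rfl
    intro i _
    ring
  simp only [key]
  have t0 : Tendsto (fun K : ℕ => (K:ℝ)+M) atTop atTop :=
    tendsto_atTop_add_const_right _ _ tendsto_natCast_atTop_atTop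
  have t1 : Tendsto (fun K : ℕ => ((K:ℝ)+M)^2) atTop atTop :=
    (tendsto_pow_atTop (two_ne_zero)).comp t0
  have t2 : Tendsto (fun K : ℕ => 1/2 * (1/((K:ℝ)+M)^2)) atTop (nhds 0) := by
    have := t1.inv_tendsto_atTop
    have h3 := this.const_mul (1/2 : ℝ)
    simpa [one_div] using h3
  have := (tendsto_const_nhds (x := 1/2 * (1/((0:ℝ)+M)^2)) (f := atTop (α := ℕ))).sub t2
  rw [sub_zero] at this
  convert this using 2
  ring

lemma tail_le (M : ℕ) (hM : 1 ≤ M) :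
    ∑' n : ℕ, (1:ℝ) / ((n:ℝ) + M + 1) ^ 3 ≤ 1/(2*(M:ℝ)^2) := by
  have hMpos : (0:ℝ) < M := by exact_mod_cast hM
  have hle : ∀ n : ℕ, (1:ℝ) / ((n:ℝ) + M + 1) ^ 3
      ≤ (1/2) * (1/((n:ℝ)+M)^2 - 1/((n:ℝ)+M+1)^2) := by
    intro n
    set a : ℝ := (n:ℝ) + M with ha
    have hn : (0:ℝ) ≤ (n:ℝ) := Nat.cast_nonneg n
    have hM1 : (1:ℝ) ≤ (M:ℝ) := by exact_mod_cast hM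
    have h0 : (1:ℝ) ≤ a := by rw [ha]; linarith
    have h1 : (0:ℝ) < a := by linarith
    have h2 : (0:ℝ) < a + 1 := by linarith
    have e : (1/2) * (1/a^2 - 1/(a+1)^2) - 1/(a+1)^3 = (3*a+1) / (2*a^2*(a+1)^3) := by
      field_simp
      ring
    have h4 : 0 ≤ (1/2) * (1/a^2 - 1/(a+1)^2) - 1/(a+1)^3 := by
      rw [e]; positivity
    linarith
  calc ∑' n : ℕ, (1:ℝ) / ((n:ℝ) + M + 1) ^ 3
      ≤ ∑' n : ℕ, (1/2) * (1/((n:ℝ)+M)^2 - 1/((n:ℝ)+M+1)^2) := by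
        apply Summable.tsum_le_tsum hle
        · exact Summable.of_nonneg_of_le (fun n => by positivity) hle (tail_hasSum M hM).summable
        · exact (tail_hasSum M hM).summable
    _ = 1/(2*(M:ℝ)^2) := (tail_hasSum M hM).tsum_eq

/-- `H_2(θ) = ∑_{n≥1} n^{-3} (1 - cos nθ)`. -/
noncomputable def Hfun2 (θ : ℝ) : ℝ :=
  ∑' n : ℕ, ((n : ℝ) + 1) ^ (-(3 : ℝ)) * (1 - Real.cos (((n : ℝ) + 1) * θ))

lemma harmonic_sum (N : ℕ) : ∑ n ∈ Finset.range N, 1/((n:ℝ)+1) = (harmonic N : ℝ) := by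
  rw [harmonic]
  push_cast
  simp [one_div]

lemma core {θ : ℝ} (h0 : 0 < θ) (h1 : θ < 1/100) :
    |Hfun2 θ - θ^2/2 * (harmonic ⌊1/θ⌋₊ : ℝ)| ≤ 5 * θ^2 := by
  set N : ℕ := ⌊1/θ⌋₊ with hNdef
  have hinv : (100:ℝ) < 1/θ := by
    rw [lt_div_iff₀ h0]; linarith
  have hN100 : 100 ≤ N := Nat.le_floor (by exact_mod_cast hinv.le)
  have hN1 : 1 ≤ N := le_trans (by norm_num) hN100
  have hNpos : (0:ℝ) < N := by exact_mod_cast hN1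
  have hNle : (N:ℝ) ≤ 1/θ := Nat.floor_le (by positivity)
  have hNθ : (N:ℝ) * θ ≤ 1 := by
    rw [← le_div_iff₀ h0] at *; exact hNle
  have hlt : 1/θ < (N:ℝ) + 1 := Nat.lt_floor_add_one _
  set f : ℕ → ℝ := fun n => 1/((n:ℝ)+1)^3 * (1 - Real.cos (((n:ℝ)+1)*θ)) with hf
  have hH : Hfun2 θ = ∑' n, f n := by
    apply tsum_congr
    intro n
    rw [hf]
    simp only []
    rw [rpow_neg3 (by positivity)]
  have hf_nonneg : ∀ n, 0 ≤ f n := by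
    intro n
    apply mul_nonneg (by positivity)
    have := Real.cos_le_one (((n:ℝ)+1)*θ)
    linarith
  have hf_le : ∀ n, f n ≤ 1/((n:ℝ)+1)^3 * 2 := by
    intro n
    apply mul_le_mul_of_nonneg_left _ (by positivity)
    have := Real.neg_one_le_cos (((n:ℝ)+1)*θ)
    linarith
  have hfsum : Summable f :=
    Summable.of_nonneg_of_le hf_nonneg hf_le (summable_cube.mul_right 2)
  have hsplit := Summable.sum_add_tsum_nat_add (f := f) N hfsum
  -- main part estimate
  have hterm : ∀ n ∈ Finset.range N, |f n - θ^2/2 * (1/((n:ℝ)+1))| ≤ 5/96 * θ^4 * (N:ℝ) := by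
    intro n hn
    have hn' : (n:ℝ) + 1 ≤ (N:ℝ) := by
      have : n + 1 ≤ N := Finset.mem_range.mp hn
      exact_mod_cast this
    have hnp : (0:ℝ) < (n:ℝ)+1 := by positivity
    have hx1 : ((n:ℝ)+1)*θ ≤ 1 := by
      calc ((n:ℝ)+1)*θ ≤ (N:ℝ)*θ := by nlinarith
      _ ≤ 1 := hNθ
    have habs : |((n:ℝ)+1)*θ| ≤ 1 := by
      rw [abs_of_nonneg (by positivity)]; exact hx1
    have hc := Real.cos_bound habs
    rw [abs_of_nonneg (by positivity : (0:ℝ) ≤ ((n:ℝ)+1)*θ)] at hc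
    have heq : f n - θ^2/2 * (1/((n:ℝ)+1))
        = -(1/((n:ℝ)+1)^3 * (Real.cos (((n:ℝ)+1)*θ) - (1 - (((n:ℝ)+1)*θ)^2/2))) := by
      rw [hf]
      simp only []
      field_simp
      ring
    rw [heq, abs_neg, abs_mul, abs_of_nonneg (by positivity : (0:ℝ) ≤ 1/((n:ℝ)+1)^3)]
    calc 1/((n:ℝ)+1)^3 * |Real.cos (((n:ℝ)+1)*θ) - (1 - (((n:ℝ)+1)*θ)^2/2)|
        ≤ 1/((n:ℝ)+1)^3 * ((((n:ℝ)+1)*θ)^4 * (5/96)) := by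
          apply mul_le_mul_of_nonneg_left hc (by positivity)
      _ = 5/96 * θ^4 * ((n:ℝ)+1) := by field_simp
      _ ≤ 5/96 * θ^4 * (N:ℝ) := by
          apply mul_le_mul_of_nonneg_left hn' (by positivity)
  have hmain : |∑ n ∈ Finset.range N, f n - θ^2/2 * (harmonic N : ℝ)| ≤ 5/96 * θ^2 := by
    have e1 : ∑ n ∈ Finset.range N, f n - θ^2/2 * (harmonic N : ℝ)
        = ∑ n ∈ Finset.range N, (f n - θ^2/2 * (1/((n:ℝ)+1))) := by
      rw [Finset.sum_sub_distrib, ← Finset.mul_sum, harmonic_sum]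
    rw [e1]
    calc |∑ n ∈ Finset.range N, (f n - θ^2/2 * (1/((n:ℝ)+1)))|
        ≤ ∑ n ∈ Finset.range N, |f n - θ^2/2 * (1/((n:ℝ)+1))| :=
          Finset.abs_sum_le_sum_abs _ _
      _ ≤ ∑ _n ∈ Finset.range N, 5/96 * θ^4 * (N:ℝ) := Finset.sum_le_sum hterm
      _ = (N:ℝ) * (5/96 * θ^4 * (N:ℝ)) := by
          rw [Finset.sum_const, Finset.card_range]; simp [nsmul_eq_mul]
      _ ≤ 5/96 * θ^2 := by
          have h2 : ((N:ℝ)*θ)^2 ≤ 1 := by nlinarith [mul_nonneg hNpos.le h0.le]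
          nlinarith [h2, sq_nonneg θ]
  -- tail estimate
  have htail : ∑' n : ℕ, f (n + N) ≤ 4 * θ^2 := by
    have hcast : ∀ n : ℕ, ((n + N : ℕ) : ℝ) = (n:ℝ) + (N:ℝ) := by intro n; push_cast; ring
    have hle2 : ∀ n : ℕ, f (n + N) ≤ 1/((n:ℝ) + N + 1)^3 * 2 := by
      intro n
      have := hf_le (n + N)
      rwa [hcast n] at this
    have hsum2 : Summable (fun n : ℕ => 1/((n:ℝ) + N + 1)^3 * 2) := by
      have := ((summable_nat_add_iff (f := fun n : ℕ => 1/((n:ℝ)+1)^3) N).mpr summable_cube)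
      have h2 : Summable (fun n : ℕ => 1/((n:ℝ) + N + 1)^3) := by
        refine this.congr fun n => ?_
        rw [hcast n]
      exact h2.mul_right 2
    calc ∑' n : ℕ, f (n + N)
        ≤ ∑' n : ℕ, 1/((n:ℝ) + N + 1)^3 * 2 :=
          Summable.tsum_le_tsum hle2 ((summable_nat_add_iff N).mpr hfsum) hsum2
      _ = (∑' n : ℕ, 1/((n:ℝ) + N + 1)^3) * 2 := tsum_mul_right
      _ ≤ 1/(2*(N:ℝ)^2) * 2 := by
          apply mul_le_mul_of_nonneg_right (tail_le N hN1) (by norm_num)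
      _ = 1/(N:ℝ)^2 := by field_simp
      _ ≤ 4 * θ^2 := by
          rw [div_le_iff₀ (by positivity)]
          have hN1' : (1:ℝ) ≤ (N:ℝ) := by exact_mod_cast hN1
          have h3 : 1 < 2*(N:ℝ)*θ := by
            rw [div_lt_iff₀ h0] at hlt
            nlinarith
          nlinarith [h3]
  have htail0 : 0 ≤ ∑' n : ℕ, f (n + N) :=
    tsum_nonneg (fun n => hf_nonneg _)
  -- combine
  rw [hH, ← hsplit]
  have : ∑ n ∈ Finset.range N, f n + ∑' n, f (n + N) - θ^2/2 * (harmonic N : ℝ)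
      = (∑ n ∈ Finset.range N, f n - θ^2/2 * (harmonic N : ℝ)) + ∑' n, f (n + N) := by ring
  rw [this]
  calc |(∑ n ∈ Finset.range N, f n - θ^2/2 * (harmonic N : ℝ)) + ∑' n, f (n + N)|
      ≤ |∑ n ∈ Finset.range N, f n - θ^2/2 * (harmonic N : ℝ)| + |∑' n, f (n + N)| :=
        abs_add_le _ _
    _ ≤ 5/96 * θ^2 + 4 * θ^2 := by
        rw [abs_of_nonneg htail0]
        exact add_le_add hmain htail
    _ ≤ 5 * θ^2 := by nlinarith [sq_nonneg θ]

lemma ratio_bounds {θ : ℝ} (h0 : 0 < θ) (h1 : θ < 1/100) :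
    1 - 10/Real.log (1/θ) ≤ Hfun2 θ / ((1/2)*θ^2*Real.log (1/θ)) ∧
    Hfun2 θ / ((1/2)*θ^2*Real.log (1/θ)) ≤ 1 + 12/Real.log (1/θ) := by
  set N : ℕ := ⌊1/θ⌋₊ with hNdef
  set L : ℝ := Real.log (1/θ) with hLdef
  have hinv : (100:ℝ) < 1/θ := by rw [lt_div_iff₀ h0]; linarith
  have hN1 : 1 ≤ N := Nat.le_floor (by rw [Nat.cast_one]; linarith)
  have hNpos : (0:ℝ) < N := by exact_mod_cast hN1
  have hNle : (N:ℝ) ≤ 1/θ := Nat.floor_le (by positivity)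
  have hlt : 1/θ < (N:ℝ) + 1 := Nat.lt_floor_add_one _
  have hL4 : 4 < L := by
    have h100 : Real.log 100 ≤ L := Real.log_le_log (by norm_num) hinv.le
    have he : Real.exp 4 < 100 := by
      have e1 := Real.exp_one_lt_d9
      have e4 : Real.exp 4 = Real.exp 1 ^ (4:ℕ) := by
        rw [← Real.exp_nat_mul]; norm_num
      rw [e4]
      have e2 : Real.exp 1 ^ (4:ℕ) < 2.7182818286^(4:ℕ) :=
        pow_lt_pow_left₀ e1 (Real.exp_pos 1).le (by norm_num)
      calc Real.exp 1 ^ (4:ℕ) < 2.7182818286^(4:ℕ) := e2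
        _ < 100 := by norm_num
    have := (Real.lt_log_iff_exp_lt (by norm_num : (0:ℝ) < 100)).mpr he
    linarith
  have hL0 : 0 < L := by linarith
  have hD : 0 < (1/2)*θ^2*L := by positivity
  have hHlow : L ≤ (harmonic N : ℝ) := by
    have h2 := log_add_one_le_harmonic N
    push_cast at h2
    have h3 : L ≤ Real.log ((N:ℝ)+1) := Real.log_le_log (by positivity) hlt.le
    linarith
  have hHhigh : (harmonic N : ℝ) ≤ 1 + L := by
    have h2 := harmonic_le_one_add_log N
    have h3 : Real.log (N:ℝ) ≤ L := Real.log_le_log hNpos hNle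
    linarith
  have habs := abs_le.mp (core h0 h1)
  rw [← hNdef] at habs
  constructor
  · rw [le_div_iff₀ hD]
    have heq : (1 - 10/L)*((1/2)*θ^2*L) = 1/2*θ^2*L - 5*θ^2 := by
      field_simp
      ring
    rw [heq]
    have h4 := mul_le_mul_of_nonneg_left hHlow (by positivity : (0:ℝ) ≤ θ^2/2)
    linarith [habs.1]
  · rw [div_le_iff₀ hD]
    have heq : (1 + 12/L)*((1/2)*θ^2*L) = 1/2*θ^2*L + 6*θ^2 := by
      field_simp
      ring
    rw [heq]
    have h4 := mul_le_mul_of_nonneg_left hHhigh (by positivity : (0:ℝ) ≤ θ^2/2)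
    nlinarith [habs.2, sq_nonneg θ]

theorem Hfun_asymptotic_eq_two :
    Filter.Tendsto
      (fun θ : ℝ => Hfun2 θ / ((1 / 2) * θ ^ 2 * Real.log (1 / θ)))
      (nhdsWithin 0 (Set.Ioi 0)) (nhds 1) := by
  have hL : Tendsto (fun θ:ℝ => Real.log (1/θ)) (nhdsWithin 0 (Set.Ioi 0)) atTop := by
    have : Tendsto (fun θ:ℝ => -Real.log θ) (nhdsWithin 0 (Set.Ioi 0)) atTop :=
      tendsto_neg_atBot_atTop.comp Real.tendsto_log_nhdsGT_zero
    refine this.congr fun θ => ?_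
    rw [one_div, Real.log_inv]
  have hlow : Tendsto (fun θ:ℝ => 1 - 10/Real.log (1/θ)) (nhdsWithin 0 (Set.Ioi 0)) (nhds 1) := by
    have h2 : Tendsto (fun θ:ℝ => 10/Real.log (1/θ)) (nhdsWithin 0 (Set.Ioi 0)) (nhds 0) :=
      Tendsto.div_atTop tendsto_const_nhds hL
    simpa using tendsto_const_nhds.sub h2
  have hhigh : Tendsto (fun θ:ℝ => 1 + 12/Real.log (1/θ)) (nhdsWithin 0 (Set.Ioi 0)) (nhds 1) := by
    have h2 : Tendsto (fun θ:ℝ => 12/Real.log (1/θ)) (nhdsWithin 0 (Set.Ioi 0)) (nhds 0) :=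
      Tendsto.div_atTop tendsto_const_nhds hL
    simpa using tendsto_const_nhds.add h2
  have hmem : Set.Ioo (0:ℝ) (1/100) ∈ nhdsWithin (0:ℝ) (Set.Ioi 0) :=
    Ioo_mem_nhdsGT_of_mem (by norm_num)
  refine tendsto_of_tendsto_of_tendsto_of_le_of_le' hlow hhigh ?_ ?_
  · filter_upwards [hmem] with θ hθ
    exact (ratio_bounds hθ.1 hθ.2).1
  · filter_upwards [hmem] with θ hθ
    exact (ratio_bounds hθ.1 hθ.2).2
end

section
/- Let d ≥ 1, α > 2, and F_d(θ) = ∑_{z ∈ ℤ^d \ {0}} ‖z‖^{−(d+α)}(1 − cos⟨z,θ⟩). Then as θ → 0, F_d(θ) ≃ (1/6) C_d |θ|², where C_d = ∑_{n=1}^∞ n^{−(d+α−1)} [ (2n+1)^d (n+1) − (2n−1)^d (n−1) ] and |θ| is the Euclidean norm, i.e. F_d(θ)/((1/6)C_d|θ|²) → 1 as θ → 0. -/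
open Real Filter

/-- The summand of the series `F_d`. -/
noncomputable def FdTerm (d : ℕ) (α : ℝ) (z : Fin d → ℤ) (θ : Fin d → ℝ) : ℝ :=
  if z = 0 then 0
  else ‖z‖ ^ (-((d : ℝ) + α)) * (1 - Real.cos (∑ i, (z i : ℝ) * θ i))

/-!
Write `w z = ‖z‖ ^ (-(d + α))` and `⟪z, θ⟫ = ∑ i, z i * θ i`. Since
`|1 - cos s - s ^ 2 / 2| ≤ s ^ 2 / 2` and `1 - cos s - s ^ 2 / 2 = o(s ^ 2)`, dominated convergence
against the series `∑ w z * |z|₂ ^ 2` (finite because `α > 2`) gives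
`F_d θ = (1 / 2) ∑ w z * ⟪z, θ⟫ ^ 2 + o(|θ| ^ 2)`. The quadratic form is diagonal: negating one
coordinate preserves `w` and changes the sign of `z i * z j`. Its diagonal entries are computed
sphere by sphere of the sup norm: the sphere `‖z‖ = n` is the difference of two cubes, on which
`∑ z i ^ 2` is explicit, and the contribution of that sphere is the `n`-th term of `C_d / 3`.
-/

open Finset Topology

theorem hasSum_partition_iff {ι β : Type*} {f : ι → ℝ} (hf : 0 ≤ f)
    (S : β → Finset ι) (hS : ∀ x, ∃! n, x ∈ S n) {a : ℝ} :
    HasSum f a ↔ HasSum (fun n => ∑ x ∈ S n, f x) a := by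
  have hfiber {b : ℝ} (h : HasSum f b) : HasSum (fun n => ∑ x ∈ S n, f x) b :=
    ((Set.sigmaEquiv (fun n => (S n : Set ι)) hS).hasSum_iff.mpr h).sigma
      fun n => (S n).hasSum f
  refine ⟨hfiber, fun h => ?_⟩
  have hsum : Summable f := (summable_partition hf hS).mpr
    ⟨fun n => ((S n).hasSum f).summable, h.summable.congr fun n => ((S n).tsum_subtype f).symm⟩
  exact h.unique (hfiber hsum.hasSum) ▸ hsum.hasSum

section IntVectors

variable {ι : Type*} [Fintype ι]

theorem pi_norm_eq_sup_natAbs (z : ι → ℤ) :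
    ‖z‖ = ((univ.sup fun i => (z i).natAbs : ℕ) : ℝ) := by
  rw [Pi.norm_def, ← NNReal.coe_natCast, Nat.cast_finsetSup]
  simp only [NNReal.natCast_natAbs]

variable (ι) [DecidableEq ι]

noncomputable def intCube (N : ℕ) : Finset (ι → ℤ) :=
  Fintype.piFinset fun _ => Icc (-N : ℤ) N

noncomputable def intSphere (N : ℕ) : Finset (ι → ℤ) := {z ∈ intCube ι N | ‖z‖ = N}

variable {ι}

theorem mem_intCube {N : ℕ} {z : ι → ℤ} : z ∈ intCube ι N ↔ ‖z‖ ≤ N := by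
  simp only [intCube, Fintype.mem_piFinset, mem_Icc, pi_norm_le_iff_of_nonneg (Nat.cast_nonneg N),
    Int.norm_eq_abs, abs_le]
  norm_cast

theorem mem_intSphere {N : ℕ} {z : ι → ℤ} : z ∈ intSphere ι N ↔ ‖z‖ = N := by
  rw [intSphere, mem_filter, mem_intCube, and_iff_right_of_imp fun h => h.le]

theorem existsUnique_mem_intSphere (z : ι → ℤ) : ∃! N : ℕ, z ∈ intSphere ι N := by
  simp only [mem_intSphere, pi_norm_eq_sup_natAbs, Nat.cast_inj]
  exact ⟨_, rfl, fun _ h => h.symm⟩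

theorem intSphere_zero : intSphere ι 0 = {0} := by
  ext z
  simp [mem_intSphere]

theorem intSphere_succ (N : ℕ) : intSphere ι (N + 1) = intCube ι (N + 1) \ intCube ι N := by
  ext z
  obtain ⟨n, hn⟩ : ∃ n : ℕ, ‖z‖ = n := ⟨_, pi_norm_eq_sup_natAbs z⟩
  rw [Finset.mem_sdiff, mem_intSphere, mem_intCube, mem_intCube, hn]
  norm_cast
  omega

theorem sum_Icc_sq (N : ℕ) :
    ∑ x ∈ Icc (-N : ℤ) N, (x : ℝ) ^ 2 = N * (N + 1) * (2 * N + 1) / 3 := by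
  induction N with
  | zero => simp
  | succ n ih =>
    have hIcc : Icc (-(n + 1 : ℕ) : ℤ) (n + 1 : ℕ) =
        insert (-(n + 1 : ℤ)) (insert (n + 1 : ℤ) (Icc (-n : ℤ) n)) := by
      ext x; simp only [mem_Icc, mem_insert]; omega
    rw [hIcc, sum_insert (by simp only [mem_insert, mem_Icc]; omega),
      sum_insert (by simp only [mem_Icc]; omega), ih]
    push_cast
    ring

theorem sum_intCube_sq (N : ℕ) (i : ι) :
    ∑ z ∈ intCube ι N, (z i : ℝ) ^ 2 = (2 * N + 1) ^ Fintype.card ι * N * (N + 1) / 3 := by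
  obtain ⟨k, hk⟩ : ∃ k, Fintype.card ι = k + 1 :=
    ⟨_, (Nat.succ_pred_eq_of_pos (Fintype.card_pos_iff.mpr ⟨i⟩)).symm⟩
  rw [intCube, Fintype.sum_piFinset_apply (fun x : ℤ => (x : ℝ) ^ 2), sum_Icc_sq, Int.card_Icc,
    nsmul_eq_mul, hk, Nat.add_sub_cancel, show (N + 1 - -N : ℤ).toNat = 2 * N + 1 by omega]
  push_cast
  ring

end IntVectors

noncomputable def cdTerm (d : ℕ) (α m : ℝ) : ℝ :=
  m ^ (-((d : ℝ) + α - 1)) * ((2 * m + 1) ^ d * (m + 1) - (2 * m - 1) ^ d * (m - 1))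

noncomputable def Cd (d : ℕ) (α : ℝ) : ℝ := ∑' n : ℕ, cdTerm d α ((n : ℝ) + 1)

section Constant

variable {d : ℕ} {α m : ℝ}

theorem cdTerm_nonneg (hm : 1 ≤ m) : 0 ≤ cdTerm d α m := by
  have hbracket : (2 * m - 1) ^ d * (m - 1) ≤ (2 * m + 1) ^ d * (m + 1) := by
    gcongr <;> linarith
  exact mul_nonneg (by positivity) (sub_nonneg.mpr hbracket)

theorem cdTerm_le (hm : 1 ≤ m) : cdTerm d α m ≤ (d + 2) * 3 ^ d * m ^ (1 - α) := by
  have hdiff : (2 * m + 1) ^ d - (2 * m - 1) ^ d ≤ 2 * d * (2 * m + 1) ^ (d - 1) := by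
    have := (le_abs_self _).trans (abs_pow_sub_pow_le (2 * m + 1) (2 * m - 1) d)
    rwa [abs_of_pos (by linarith : (0 : ℝ) < 2 * m + 1),
      abs_of_pos (by linarith : (0 : ℝ) < 2 * m - 1), max_eq_left (by linarith),
      show 2 * m + 1 - (2 * m - 1) = (2 : ℝ) by ring, abs_two] at this
  have hpow : (d : ℝ) * (2 * m + 1) ^ (d - 1) * (2 * m + 1) = d * (2 * m + 1) ^ d := by
    rcases d with _ | d
    · simp
    · simp [pow_succ, mul_assoc]
  have hbracket : (2 * m + 1) ^ d * (m + 1) - (2 * m - 1) ^ d * (m - 1) ≤ (d + 2) * (3 * m) ^ d :=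
    calc (2 * m + 1) ^ d * (m + 1) - (2 * m - 1) ^ d * (m - 1)
        = 2 * (2 * m + 1) ^ d + (m - 1) * ((2 * m + 1) ^ d - (2 * m - 1) ^ d) := by ring
      _ ≤ 2 * (2 * m + 1) ^ d + (d * (2 * m + 1) ^ (d - 1)) * (2 * (m - 1)) := by
        linarith [mul_le_mul_of_nonneg_left hdiff (by linarith : (0 : ℝ) ≤ m - 1)]
      _ ≤ 2 * (2 * m + 1) ^ d + (d * (2 * m + 1) ^ (d - 1)) * (2 * m + 1) := by
        gcongr; linarith
      _ = (d + 2) * (2 * m + 1) ^ d := by rw [hpow]; ring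
      _ ≤ (d + 2) * (3 * m) ^ d := by gcongr; linarith
  calc cdTerm d α m ≤ m ^ (-((d : ℝ) + α - 1)) * ((d + 2) * (3 * m) ^ d) :=
        mul_le_mul_of_nonneg_left hbracket (by positivity)
    _ = (d + 2) * 3 ^ d * m ^ (1 - α) := by
        have hexp : m ^ (-((d : ℝ) + α - 1)) * m ^ (d : ℝ) = m ^ (1 - α) := by
          rw [← rpow_add (by linarith)]
          ring_nf
        rw [mul_pow, ← rpow_natCast m d]
        linear_combination ((d + 2) * 3 ^ d : ℝ) * hexp

theorem summable_cdTerm (hα : 2 < α) : Summable fun n : ℕ => cdTerm d α ((n : ℝ) + 1) := by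
  have hp : Summable fun n : ℕ => ((n : ℝ) + 1) ^ (1 - α) := by
    simpa using (summable_nat_add_iff 1).mpr
      (Real.summable_nat_rpow.mpr (by linarith : 1 - α < -1))
  refine .of_nonneg_of_le (fun n => cdTerm_nonneg ?_) (fun n => cdTerm_le ?_) (hp.mul_left _) <;>
    simp

theorem Cd_pos (hα : 2 < α) : 0 < Cd d α :=
  (summable_cdTerm hα).tsum_pos (fun n => cdTerm_nonneg (by simp)) 0 (by norm_num [cdTerm])

end Constant

noncomputable def pairing {ι : Type*} [Fintype ι] (z : ι → ℤ) (θ : ι → ℝ) : ℝ :=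
  ∑ i, (z i : ℝ) * θ i

noncomputable def latticeWeight {ι : Type*} [Fintype ι] (s : ℝ) (z : ι → ℤ) : ℝ :=
  if z = 0 then 0 else ‖z‖ ^ (-s)

section Weight

variable {ι : Type*} [Fintype ι] {s : ℝ}

theorem latticeWeight_nonneg (z : ι → ℤ) : 0 ≤ latticeWeight s z := by
  unfold latticeWeight; split_ifs <;> positivity

theorem latticeWeight_congr_norm {z z' : ι → ℤ} (h : ‖z‖ = ‖z'‖) :
    latticeWeight s z = latticeWeight s z' := by
  simp_rw [latticeWeight, ← norm_eq_zero (a := z), ← norm_eq_zero (a := z'), h]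

theorem FdTerm_eq (d : ℕ) (α : ℝ) (z : Fin d → ℤ) (θ : Fin d → ℝ) :
    FdTerm d α z θ = latticeWeight (d + α) z * (1 - cos (pairing z θ)) := by
  unfold FdTerm latticeWeight pairing
  split_ifs <;> simp

theorem tsum_latticeWeight_mul_mul_eq_zero [DecidableEq ι] {i j : ι} (hij : i ≠ j) :
    ∑' z : ι → ℤ, latticeWeight s z * ((z i : ℝ) * z j) = 0 := by
  set f := fun z : ι → ℤ => latticeWeight s z * ((z i : ℝ) * z j)
  let reflect (z : ι → ℤ) : ι → ℤ := Function.update z i (-z i)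
  have hinv : Function.Involutive reflect := fun z => by simp [reflect]
  have hodd (z : ι → ℤ) : f (reflect z) = -f z := by
    have hnorm : ‖reflect z‖ = ‖z‖ := by
      have : (fun k => ‖reflect z k‖₊) = fun k => ‖z k‖₊ := by
        funext k
        by_cases hk : k = i <;> simp [reflect, hk]
      simp only [Pi.norm_def, this]
    simp [f, reflect, latticeWeight_congr_norm hnorm, Function.update_of_ne hij.symm]
  have hsymm : ∑' z, f (reflect z) = ∑' z, f z := (hinv.toPerm reflect).tsum_eq f
  rw [tsum_congr hodd, tsum_neg] at hsymm
  linarith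

end Weight

section SecondMoments

variable {d : ℕ} {α : ℝ}

theorem sum_intSphere_latticeWeight_mul_sq (N : ℕ) (i : Fin d) :
    ∑ z ∈ intSphere (Fin d) (N + 1), latticeWeight (d + α) z * (z i : ℝ) ^ 2 =
      cdTerm d α (N + 1) / 3 := by
  have hweight (z) (hz : z ∈ intSphere (Fin d) (N + 1)) :
      latticeWeight (d + α) z = ((N : ℝ) + 1) ^ (-((d : ℝ) + α)) := by
    rw [mem_intSphere] at hz
    have hz0 : z ≠ 0 := norm_ne_zero_iff.mp (by rw [hz]; positivity)
    rw [latticeWeight, if_neg hz0, hz]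
    push_cast
    rfl
  have hsub : intCube (Fin d) N ⊆ intCube (Fin d) (N + 1) := fun z hz =>
    mem_intCube.mpr ((mem_intCube.mp hz).trans (by simp))
  rw [sum_congr rfl fun z hz => by rw [hweight z hz], ← mul_sum, intSphere_succ,
    sum_sdiff_eq_sub hsub, sum_intCube_sq, sum_intCube_sq, Fintype.card_fin, cdTerm,
    show -((d : ℝ) + α - 1) = -((d : ℝ) + α) + 1 by ring, rpow_add_one (by positivity)]
  push_cast
  ring

theorem hasSum_latticeWeight_mul_sq (hα : 2 < α) (i : Fin d) :
    HasSum (fun z : Fin d → ℤ => latticeWeight (d + α) z * (z i : ℝ) ^ 2) (Cd d α / 3) := by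
  rw [hasSum_partition_iff (fun z => mul_nonneg (latticeWeight_nonneg z) (sq_nonneg _))
    (intSphere (Fin d)) existsUnique_mem_intSphere, ← hasSum_nat_add_iff' 1]
  simp only [range_one, sum_singleton, intSphere_zero, sum_intSphere_latticeWeight_mul_sq]
  simpa [latticeWeight, Cd] using (summable_cdTerm hα).hasSum.div_const 3

theorem hasSum_latticeWeight_mul_mul (hα : 2 < α) (i j : Fin d) :
    HasSum (fun z : Fin d → ℤ => latticeWeight (d + α) z * ((z i : ℝ) * z j))
      (if i = j then Cd d α / 3 else 0) := by
  by_cases hij : i = j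
  · subst hij
    simpa [sq] using hasSum_latticeWeight_mul_sq hα i
  have hsum : Summable fun z : Fin d → ℤ => latticeWeight (d + α) z * ((z i : ℝ) * z j) := by
    refine .of_norm_bounded ((hasSum_latticeWeight_mul_sq hα i).summable.add
      (hasSum_latticeWeight_mul_sq hα j).summable) fun z => ?_
    have hprod : |(z i : ℝ) * z j| ≤ (z i : ℝ) ^ 2 + (z j : ℝ) ^ 2 :=
      abs_le.mpr ⟨by nlinarith [sq_nonneg ((z i : ℝ) + z j)],
        by nlinarith [sq_nonneg ((z i : ℝ) - z j)]⟩
    rw [norm_mul, Real.norm_of_nonneg (latticeWeight_nonneg z), Real.norm_eq_abs, ← mul_add]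
    exact mul_le_mul_of_nonneg_left hprod (latticeWeight_nonneg z)
  rw [if_neg hij, ← tsum_latticeWeight_mul_mul_eq_zero hij]
  exact hsum.hasSum

theorem hasSum_latticeWeight_mul_pairing_sq (hα : 2 < α) (θ : Fin d → ℝ) :
    HasSum (fun z : Fin d → ℤ => latticeWeight (d + α) z * pairing z θ ^ 2)
      (Cd d α / 3 * ∑ i, θ i ^ 2) := by
  have hexpand (z : Fin d → ℤ) : latticeWeight (d + α) z * pairing z θ ^ 2 =
      ∑ i, ∑ j, latticeWeight (d + α) z * ((z i : ℝ) * z j) * (θ i * θ j) := by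
    simp_rw [pairing, sq, sum_mul_sum, mul_sum]
    refine sum_congr rfl fun i _ => sum_congr rfl fun j _ => by ring
  have := hasSum_sum (s := univ) fun i _ => hasSum_sum (s := univ) fun j _ =>
    (hasSum_latticeWeight_mul_mul hα i j).mul_right (θ i * θ j)
  simp_rw [← hexpand, ite_mul, zero_mul, sum_ite_eq, mem_univ, if_true, ← mul_sum,
    ← sq] at this
  exact this

end SecondMoments

noncomputable def cosRemainder (x : ℝ) : ℝ := 1 - cos x - x ^ 2 / 2

theorem abs_cosRemainder_le (x : ℝ) : |cosRemainder x| ≤ x ^ 2 / 2 := by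
  have := one_sub_sq_div_two_le_cos (x := x)
  have := cos_le_one x
  rw [cosRemainder, abs_le]
  constructor <;> linarith

theorem isLittleO_cosRemainder : cosRemainder =o[𝓝 0] fun x => x ^ 2 := by
  have hquartic : cosRemainder =O[𝓝 0] fun x : ℝ => x ^ 4 := by
    refine Asymptotics.IsBigO.of_bound (5 / 96) ?_
    filter_upwards [Metric.closedBall_mem_nhds (0 : ℝ) one_pos] with x hx
    rw [Metric.mem_closedBall, dist_zero_right, Real.norm_eq_abs] at hx
    rw [Real.norm_eq_abs, Real.norm_eq_abs, abs_pow, mul_comm, ← abs_neg]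
    convert cos_bound hx using 2
    rw [cosRemainder]
    ring
  exact hquartic.trans_isLittleO (Asymptotics.isLittleO_pow_pow (by norm_num))

section Pairing

variable {ι : Type*} [Fintype ι]

theorem pairing_sq_le (z : ι → ℤ) (θ : ι → ℝ) :
    pairing z θ ^ 2 ≤ (∑ i, (z i : ℝ) ^ 2) * ∑ i, θ i ^ 2 :=
  sum_mul_sq_le_sq_mul_sq _ _ _

theorem tendsto_cosRemainder_pairing_div (z : ι → ℤ) :
    Tendsto (fun θ => cosRemainder (pairing z θ) / ∑ i, θ i ^ 2) (𝓝 0) (𝓝 0) := by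
  have hpairing : Tendsto (pairing z) (𝓝 0) (𝓝 0) := by
    have : Continuous (pairing z) := by unfold pairing; fun_prop
    simpa [pairing] using this.tendsto 0
  have hsq : (fun θ => pairing z θ ^ 2) =O[𝓝 0] fun θ => ∑ i, θ i ^ 2 := by
    refine Asymptotics.IsBigO.of_bound (∑ i, (z i : ℝ) ^ 2) (Eventually.of_forall fun θ => ?_)
    rw [Real.norm_of_nonneg (sq_nonneg _), Real.norm_of_nonneg (by positivity)]
    exact pairing_sq_le z θ
  exact ((isLittleO_cosRemainder.comp_tendsto hpairing).trans_isBigO hsq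
    ).tendsto_div_nhds_zero

end Pairing

section Asymptotics

variable {d : ℕ} {α : ℝ}

theorem tsum_FdTerm_eq (hα : 2 < α) (θ : Fin d → ℝ) :
    ∑' z, FdTerm d α z θ = Cd d α / 3 * (∑ i, θ i ^ 2) / 2 +
      ∑' z, latticeWeight (d + α) z * cosRemainder (pairing z θ) := by
  have hquad := (hasSum_latticeWeight_mul_pairing_sq hα θ).div_const 2
  have hrem : Summable fun z : Fin d → ℤ =>
      latticeWeight (d + α) z * cosRemainder (pairing z θ) := by
    refine .of_norm_bounded hquad.summable fun z => ?_
    rw [norm_mul, Real.norm_of_nonneg (latticeWeight_nonneg z), Real.norm_eq_abs, mul_div_assoc]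
    exact mul_le_mul_of_nonneg_left (abs_cosRemainder_le _) (latticeWeight_nonneg z)
  rw [← (hquad.add hrem.hasSum).tsum_eq]
  exact tsum_congr fun z => by rw [FdTerm_eq, cosRemainder]; ring

theorem tendsto_tsum_remainder_div (hα : 2 < α) :
    Tendsto (fun θ : Fin d → ℝ =>
      (∑' z, latticeWeight (d + α) z * cosRemainder (pairing z θ)) / ∑ i, θ i ^ 2)
      (𝓝 0) (𝓝 0) := by
  have hdom :
      Summable fun z : Fin d → ℤ => (∑ i, latticeWeight (d + α) z * (z i : ℝ) ^ 2) / 2 :=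
    (hasSum_sum (s := univ) fun i _ => hasSum_latticeWeight_mul_sq hα i).summable.div_const 2
  have hbound (θ : Fin d → ℝ) (z : Fin d → ℤ) :
      ‖latticeWeight (d + α) z * cosRemainder (pairing z θ) / ∑ i, θ i ^ 2‖ ≤
        (∑ i, latticeWeight (d + α) z * (z i : ℝ) ^ 2) / 2 := by
    have hq : 0 ≤ ∑ i, θ i ^ 2 := by positivity
    have hrem : |cosRemainder (pairing z θ)| / ∑ i, θ i ^ 2 ≤ (∑ i, (z i : ℝ) ^ 2) / 2 := by
      refine div_le_of_le_mul₀ hq (by positivity) ?_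
      linarith [abs_cosRemainder_le (pairing z θ), pairing_sq_le z θ]
    rw [norm_div, norm_mul, Real.norm_of_nonneg (latticeWeight_nonneg z), Real.norm_eq_abs,
      Real.norm_of_nonneg hq, mul_div_assoc, ← mul_sum, mul_div_assoc]
    exact mul_le_mul_of_nonneg_left hrem (latticeWeight_nonneg z)
  have hpoint (z : Fin d → ℤ) : Tendsto (fun θ : Fin d → ℝ => latticeWeight (d + α) z *
      cosRemainder (pairing z θ) / ∑ i, θ i ^ 2) (𝓝 0) (𝓝 0) := by
    simpa [mul_div_assoc] using
      (tendsto_cosRemainder_pairing_div z).const_mul (latticeWeight (d + α) z)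
  simpa [tsum_div_const] using
    tendsto_tsum_of_dominated_convergence hdom hpoint (Eventually.of_forall hbound)

theorem tendsto_tsum_FdTerm_div (hα : 2 < α) :
    Tendsto (fun θ : Fin d → ℝ => (∑' z, FdTerm d α z θ) / ∑ i, θ i ^ 2) (𝓝[≠] 0)
      (𝓝 (Cd d α / 6)) := by
  have hlim := ((tendsto_tsum_remainder_div (d := d) hα).mono_left
    (nhdsWithin_le_nhds (s := {0}ᶜ))).const_add (Cd d α / 6)
  rw [add_zero] at hlim
  refine hlim.congr' ?_
  filter_upwards [self_mem_nhdsWithin] with θ hθ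
  have hq : ∑ i, θ i ^ 2 ≠ 0 := fun h => hθ <| funext fun i => by
    simpa using congrFun ((Fintype.sum_eq_zero_iff_of_nonneg fun i => sq_nonneg (θ i)).mp h) i
  rw [tsum_FdTerm_eq hα, add_div]
  congr 1
  field_simp
  ring

end Asymptotics

theorem Fd_asymptotic_gt_two_general (d : ℕ) (α : ℝ) (hα : 2 < α) :
    Filter.Tendsto
      (fun θ : Fin d → ℝ =>
        (∑' z : Fin d → ℤ, FdTerm d α z θ) /
          ((1 / 6) *
            (∑' n : ℕ, ((n : ℝ) + 1) ^ (-((d : ℝ) + α - 1)) *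
              ((2 * ((n : ℝ) + 1) + 1) ^ d * (((n : ℝ) + 1) + 1) -
                (2 * ((n : ℝ) + 1) - 1) ^ d * (((n : ℝ) + 1) - 1))) *
            Real.sqrt (∑ i, θ i ^ 2) ^ 2))
      (nhdsWithin 0 {(0 : Fin d → ℝ)}ᶜ) (nhds 1) := by
  have hC : Cd d α / 6 ≠ 0 := by linarith [Cd_pos (d := d) hα]
  have hlim := (tendsto_tsum_FdTerm_div (d := d) hα).div_const (Cd d α / 6)
  rw [div_self hC] at hlim
  change Tendsto (fun θ => _ / (1 / 6 * Cd d α * _)) _ _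
  refine hlim.congr fun θ => ?_
  rw [sq_sqrt (by positivity), div_div]
  ring

theorem Fd_asymptotic_gt_two (d : ℕ) (hd : 1 ≤ d) (α : ℝ) (hα : 2 < α) :
    Filter.Tendsto
      (fun θ : Fin d → ℝ =>
        (∑' z : Fin d → ℤ, FdTerm d α z θ) /
          ((1 / 6) *
            (∑' n : ℕ, ((n : ℝ) + 1) ^ (-((d : ℝ) + α - 1)) *
              ((2 * ((n : ℝ) + 1) + 1) ^ d * (((n : ℝ) + 1) + 1) -
                (2 * ((n : ℝ) + 1) - 1) ^ d * (((n : ℝ) + 1) - 1))) *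
            Real.sqrt (∑ i, θ i ^ 2) ^ 2))
      (nhdsWithin 0 {(0 : Fin d → ℝ)}ᶜ) (nhds 1) :=
  Fd_asymptotic_gt_two_general d α hα
end

section
/- Let 0 < α ≤ 2, d ≥ 1, and suppose a_z ‖z‖^{d+α} → 1 as ‖z‖ → ∞ (z ∈ ℤ^d \ {0}, a_z ≥ 0). Then F(θ)/F_d(θ) → 1 as θ → 0, where F(θ) = ∑_{z≠0} a_z (1 − cos⟨z,θ⟩) and F_d(θ) = ∑_{z≠0} ‖z‖^{−(d+α)}(1 − cos⟨z,θ⟩). -/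
/-!
Write `r = d + α` and `φ_θ(z) = 1 - cos ⟨z, θ⟩`. Given `ε > 0`, the hypothesis makes
`|a_z - ‖z‖^{-r}| ≤ ε ‖z‖^{-r}` outside a finite set `E`, so
`|F(θ) - F_d(θ)| ≤ ε F_d(θ) + ∑_{z ∈ E} |a_z - ‖z‖^{-r}| φ_θ(z)`, and the finite sum is
`O(‖θ‖²)`. It remains to see that `‖θ‖² = o(F_d(θ))`. Choose `j` with `|θ_j| = ‖θ‖`. Averaging
`F_d` over the reflection `z_j ↦ -z_j` gives `F_d(θ) ≥ ∑_z ‖z‖^{-r} (1 - |cos (z_j θ_j)|)`, which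
is at least `(2/π²) θ_j² ∑ z_j² ‖z‖^{-r}`, the sum running over any finite set of `z` with
`‖z‖ ≤ 1/‖θ‖`. Since `r ≤ d + 2`, the series `∑ z_j² ‖z‖^{-r}` diverges: the face `z_j = k` of
the cube `‖z‖ = k` alone contributes at least `1/k`.
-/

open Real Filter

open Topology Asymptotics

lemma two_mul_one_sub_abs_cos_le (c x : ℝ) :
    2 * (1 - |cos x|) ≤ (1 - cos (c + x)) + (1 - cos (c - x)) := by
  have : cos c * cos x ≤ |cos x| :=
    calc cos c * cos x ≤ |cos c| * |cos x| := by rw [← abs_mul]; exact le_abs_self _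
      _ ≤ |cos x| := mul_le_of_le_one_left (abs_nonneg _) (abs_cos_le_one c)
  rw [cos_add, cos_sub]
  linarith

lemma mul_sq_le_one_sub_abs_cos {x : ℝ} (hx : |x| ≤ π / 2) :
    2 / π ^ 2 * x ^ 2 ≤ 1 - |cos x| := by
  rw [abs_of_nonneg (cos_nonneg_of_mem_Icc (abs_le.mp hx))]
  linarith [cos_le_one_sub_mul_cos_sq (hx.trans (by linarith [pi_pos]))]

lemma eventually_abs_sub_rpow_neg_le {ι : Type*} {l : Filter ι} {a n : ι → ℝ} {r : ℝ}
    (hn : ∀ᶠ z in l, 0 < n z) (h : Tendsto (fun z => a z * n z ^ r) l (𝓝 1)) {ε : ℝ}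
    (hε : 0 < ε) : ∀ᶠ z in l, |a z - n z ^ (-r)| ≤ ε * n z ^ (-r) := by
  filter_upwards [hn, Metric.tendsto_nhds.mp h ε hε] with z hz hdist
  have : a z - n z ^ (-r) = (a z * n z ^ r - 1) * n z ^ (-r) := by
    rw [sub_mul, mul_assoc, ← rpow_add hz, add_neg_cancel, rpow_zero, mul_one, one_mul]
  rw [this, abs_mul, abs_of_pos (rpow_pos_of_pos hz _)]
  exact mul_le_mul_of_nonneg_right (by simpa [Real.dist_eq] using hdist.le) (by positivity)

lemma abs_tsum_mul_sub_tsum_mul_le {ι : Type*} {a w φ : ι → ℝ} {ε : ℝ} (E : Finset ι)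
    (hε : 0 ≤ ε) (hw0 : ∀ z, 0 ≤ w z) (hφ : ∀ z, 0 ≤ φ z) (hw : Summable fun z => w z * φ z)
    (haw : ∀ z ∉ E, |a z - w z| ≤ ε * w z) :
    |∑' z, a z * φ z - ∑' z, w z * φ z| ≤
      ∑ z ∈ E, |a z - w z| * φ z + ε * ∑' z, w z * φ z := by
  classical
  set B := fun z => (if z ∈ E then |a z - w z| * φ z else 0) + ε * (w z * φ z)
  have hE := hasSum_sum_of_ne_finset_zero (s := E) (L := .unconditional ι)
    (f := fun z => if z ∈ E then |a z - w z| * φ z else 0) fun z hz => if_neg hz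
  rw [Finset.sum_ite_mem, Finset.inter_self] at hE
  have hB : HasSum B (∑ z ∈ E, |a z - w z| * φ z + ε * ∑' z, w z * φ z) :=
    hE.add (hw.hasSum.mul_left ε)
  have hbound : ∀ z, ‖(a z - w z) * φ z‖ ≤ B z := by
    intro z
    rw [Real.norm_eq_abs, abs_mul, abs_of_nonneg (hφ z)]
    by_cases hz : z ∈ E
    · simp only [B, if_pos hz, le_add_iff_nonneg_right]
      exact mul_nonneg hε (mul_nonneg (hw0 z) (hφ z))
    · simp only [B, if_neg hz, zero_add, ← mul_assoc]
      exact mul_le_mul_of_nonneg_right (haw z hz) (hφ z)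
  have hdiff : Summable fun z => (a z - w z) * φ z := .of_norm_bounded hB.summable hbound
  have ha : Summable fun z => a z * φ z := (hdiff.add hw).congr fun z => by ring
  rw [← ha.tsum_sub hw, ← Real.norm_eq_abs]
  simp_rw [← sub_mul]
  exact tsum_of_norm_bounded hB hbound

section

variable {d : ℕ}

lemma norm_intCast_pi (z : Fin d → ℤ) : ‖fun i => (z i : ℝ)‖ = ‖z‖ := by
  have : ∀ i, ‖(z i : ℝ)‖₊ = ‖z i‖₊ := fun i => NNReal.eq (Int.norm_cast_real _)
  simp only [Pi.norm_def, this]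

lemma summable_norm_rpow_int_pi {r : ℝ} (hr : r < -d) :
    Summable fun z : Fin d → ℤ => ‖z‖ ^ r := by
  let L := Submodule.span ℤ (Set.range (Pi.basisFun ℝ (Fin d)))
  have hmem (z : Fin d → ℤ) : (fun i => (z i : ℝ)) ∈ L := by
    have : (fun i => (z i : ℝ)) = ∑ i, z i • Pi.basisFun ℝ (Fin d) i := by
      ext; simp [Pi.single_apply]
    rw [this]
    exact Submodule.sum_mem _ fun i _ =>
      Submodule.smul_mem _ _ (Submodule.subset_span (Set.mem_range_self i))
  have hL : Summable fun x : L => ‖x‖ ^ r :=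
    ZLattice.summable_norm_rpow L r (by rwa [ZLattice.rank ℝ L, Module.finrank_fin_fun])
  refine (hL.comp_injective (i := fun z => (⟨_, hmem z⟩ : L)) fun z w h => ?_).congr fun z => ?_
  · ext i; simpa using congrFun (congrArg Subtype.val h) i
  · simp [norm_intCast_pi]

lemma abs_intCast_apply_le_norm (z : Fin d → ℤ) (i : Fin d) : |(z i : ℝ)| ≤ ‖z‖ := by
  simpa [Int.norm_eq_abs] using norm_le_pi_norm z i

lemma abs_sum_intCast_mul_le (z : Fin d → ℤ) (θ : Fin d → ℝ) :
    |∑ i, (z i : ℝ) * θ i| ≤ (∑ i, |(z i : ℝ)|) * ‖θ‖ := by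
  rw [Finset.sum_mul]
  refine (Finset.abs_sum_le_sum_abs _ _).trans (Finset.sum_le_sum fun i _ => ?_)
  rw [abs_mul]
  exact mul_le_mul_of_nonneg_left (by simpa using norm_le_pi_norm θ i) (abs_nonneg _)

noncomputable def cubeFace (j : Fin d) (k : ℕ) : Finset (Fin d → ℤ) :=
  Fintype.piFinset fun i => if i = j then {(k : ℤ)} else Finset.Icc (-(k : ℤ)) k

lemma apply_eq_of_mem_cubeFace {j : Fin d} {k : ℕ} {z : Fin d → ℤ} (hz : z ∈ cubeFace j k) :
    z j = k := by
  simpa [cubeFace] using Fintype.mem_piFinset.mp hz j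

lemma norm_eq_of_mem_cubeFace {j : Fin d} {k : ℕ} {z : Fin d → ℤ} (hz : z ∈ cubeFace j k) :
    ‖z‖ = k := by
  refine le_antisymm ((pi_norm_le_iff_of_nonneg k.cast_nonneg).mpr fun i => ?_) ?_
  · have hi := Fintype.mem_piFinset.mp hz i
    rw [Int.norm_eq_abs, ← Int.cast_abs, ← Int.cast_natCast, Int.cast_le, abs_le]
    split_ifs at hi with hij
    · subst hij; simp_all
    · simpa using hi
  · simpa [apply_eq_of_mem_cubeFace hz] using abs_intCast_apply_le_norm z j

lemma pow_le_card_cubeFace (j : Fin d) (k : ℕ) : k ^ (d - 1) ≤ (cubeFace j k).card := by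
  rw [cubeFace, Fintype.card_piFinset, ← Finset.mul_prod_erase _ _ (Finset.mem_univ j), if_pos rfl,
    Finset.card_singleton, one_mul]
  calc k ^ (d - 1) = ∏ _i ∈ Finset.univ.erase j, k := by simp
    _ ≤ _ := Finset.prod_le_prod' fun i hi => by
      rw [if_neg (Finset.ne_of_mem_erase hi), Int.card_Icc]
      omega

lemma not_summable_sq_mul_norm_rpow (j : Fin d) {r : ℝ} (hr : r ≤ d + 2) :
    ¬ Summable fun z : Fin d → ℤ => (z j : ℝ) ^ 2 * ‖z‖ ^ (-r) := by
  intro hsum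
  have hnonneg : ∀ z : Fin d → ℤ, 0 ≤ (z j : ℝ) ^ 2 * ‖z‖ ^ (-r) := fun z => by positivity
  have hface : Summable fun k => ∑ z ∈ cubeFace j k, (z j : ℝ) ^ 2 * ‖z‖ ^ (-r) := by
    refine summable_of_sum_le (c := ∑' z : Fin d → ℤ, (z j : ℝ) ^ 2 * ‖z‖ ^ (-r))
      (fun k => Finset.sum_nonneg fun z _ => hnonneg z) fun u => ?_
    rw [← Finset.sum_biUnion fun k _ l _ hkl => Finset.disjoint_left.mpr fun z hk hl =>
      hkl (by simpa using (apply_eq_of_mem_cubeFace hk).symm.trans (apply_eq_of_mem_cubeFace hl))]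
    exact hsum.sum_le_tsum _ fun z _ => hnonneg z
  refine Real.not_summable_natCast_inv (hface.of_nonneg_of_le (fun k => by positivity) fun k => ?_)
  rcases k.eq_zero_or_pos with rfl | hk
  · simpa using Finset.sum_nonneg fun z _ => hnonneg z
  have hk1 : (1 : ℝ) ≤ k := by exact_mod_cast hk
  have hd : 1 ≤ d := Fin.pos j
  calc (k : ℝ)⁻¹ = (k : ℝ) ^ (d - 1) * (k : ℝ) ^ (-(d : ℝ)) := by
        have : (k : ℝ) ^ d = k ^ (d - 1) * k := by rw [← pow_succ, Nat.sub_add_cancel hd]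
        rw [Real.rpow_neg (by positivity), Real.rpow_natCast, this]
        field_simp
    _ ≤ (cubeFace j k).card * (k : ℝ) ^ (2 - r) := by
        gcongr
        · exact_mod_cast pow_le_card_cubeFace j k
        · linarith
    _ = ∑ z ∈ cubeFace j k, (z j : ℝ) ^ 2 * ‖z‖ ^ (-r) := by
        rw [Finset.card_eq_sum_ones, Nat.cast_sum, Finset.sum_mul]
        refine Finset.sum_congr rfl fun z hz => ?_
        rw [apply_eq_of_mem_cubeFace hz, norm_eq_of_mem_cubeFace hz, ← Real.rpow_natCast,
          sub_eq_add_neg, Real.rpow_add (by positivity)]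
        simp

def reflect (j : Fin d) (z : Fin d → ℤ) : Fin d → ℤ := Function.update z j (-z j)

lemma reflect_involutive (j : Fin d) : Function.Involutive (reflect j) := by
  intro z; ext i; by_cases h : i = j <;> simp [reflect, h]

lemma norm_reflect (j : Fin d) (z : Fin d → ℤ) : ‖reflect j z‖ = ‖z‖ := by
  have : ∀ i, ‖reflect j z i‖₊ = ‖z i‖₊ := by
    intro i; by_cases h : i = j <;> simp [reflect, h]
  simp only [Pi.norm_def, this]

lemma sum_reflect_mul (j : Fin d) (z : Fin d → ℤ) (θ : Fin d → ℝ) :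
    ∑ i, (reflect j z i : ℝ) * θ i = ∑ i, (z i : ℝ) * θ i - 2 * ((z j : ℝ) * θ j) := by
  have : ∀ i, (reflect j z i : ℝ) * θ i =
      (z i : ℝ) * θ i - if i = j then 2 * ((z j : ℝ) * θ j) else 0 := by
    intro i
    by_cases h : i = j
    · subst h
      simp only [reflect, Function.update_self, Int.cast_neg, ↓reduceIte]
      ring
    · simp [reflect, h]
  simp only [this, Finset.sum_sub_distrib, Finset.sum_ite_eq', Finset.mem_univ, if_true]

lemma two_mul_one_sub_abs_cos_le_add_reflect (j : Fin d) (z : Fin d → ℤ) (θ : Fin d → ℝ) :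
    2 * (1 - |cos ((z j : ℝ) * θ j)|) ≤
      (1 - cos (∑ i, (z i : ℝ) * θ i)) + (1 - cos (∑ i, (reflect j z i : ℝ) * θ i)) := by
  rw [sum_reflect_mul]
  convert two_mul_one_sub_abs_cos_le (∑ i, (z i : ℝ) * θ i - z j * θ j) (z j * θ j) using 4 <;>
    ring

lemma sum_mul_one_sub_abs_cos_le_tsum (j : Fin d) (θ : Fin d → ℝ) {w : (Fin d → ℤ) → ℝ}
    (hw0 : ∀ z, 0 ≤ w z) (hw : ∀ z, w (reflect j z) = w z)
    (hsum : Summable fun z => w z * (1 - cos (∑ i, (z i : ℝ) * θ i)))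
    (s : Finset (Fin d → ℤ)) :
    ∑ z ∈ s, w z * (1 - |cos ((z j : ℝ) * θ j)|) ≤
      ∑' z, w z * (1 - cos (∑ i, (z i : ℝ) * θ i)) := by
  set φ := fun z => w z * (1 - cos (∑ i, (z i : ℝ) * θ i))
  let e := (reflect_involutive j).toPerm
  have hsumσ : Summable fun z => φ (e z) := e.summable_iff.mpr hsum
  have hle : ∀ z, w z * (1 - |cos ((z j : ℝ) * θ j)|) ≤ (φ z + φ (e z)) / 2 := fun z => by
    have := mul_le_mul_of_nonneg_left (two_mul_one_sub_abs_cos_le_add_reflect j z θ) (hw0 z)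
    simp only [φ, e, Function.Involutive.coe_toPerm, hw]
    linarith
  have hnonneg : ∀ z, 0 ≤ w z * (1 - |cos ((z j : ℝ) * θ j)|) := fun z =>
    mul_nonneg (hw0 z) (by linarith [abs_cos_le_one ((z j : ℝ) * θ j)])
  calc ∑ z ∈ s, w z * (1 - |cos ((z j : ℝ) * θ j)|) ≤ ∑ z ∈ s, (φ z + φ (e z)) / 2 :=
        Finset.sum_le_sum fun z _ => hle z
    _ ≤ ∑' z, (φ z + φ (e z)) / 2 :=
        ((hsum.add hsumσ).div_const 2).sum_le_tsum _ fun z _ => (hnonneg z).trans (hle z)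
    _ = ∑' z, φ z := by
        rw [tsum_div_const, hsum.tsum_add hsumσ, e.tsum_eq φ, add_self_div_two]

lemma summable_norm_rpow_mul_one_sub_cos {r : ℝ} (hr : (d : ℝ) < r) (θ : Fin d → ℝ) :
    Summable fun z : Fin d → ℤ => ‖z‖ ^ (-r) * (1 - cos (∑ i, (z i : ℝ) * θ i)) :=
  ((summable_norm_rpow_int_pi (neg_lt_neg hr)).mul_right 2).of_nonneg_of_le
    (fun z => mul_nonneg (by positivity) (by linarith [cos_le_one (∑ i, (z i : ℝ) * θ i)]))
    fun z => mul_le_mul_of_nonneg_left (by linarith [neg_one_le_cos (∑ i, (z i : ℝ) * θ i)])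
      (by positivity)

lemma exists_abs_apply_eq_norm {θ : Fin d → ℝ} (hθ : θ ≠ 0) : ∃ j, |θ j| = ‖θ‖ := by
  obtain ⟨i₀, -⟩ := Function.ne_iff.mp hθ
  have : Nonempty (Fin d) := ⟨i₀⟩
  obtain ⟨j, hj⟩ := Finite.exists_max fun i => |θ i|
  exact ⟨j, le_antisymm (by simpa using norm_le_pi_norm θ j)
    ((pi_norm_le_iff_of_nonneg (abs_nonneg _)).mpr fun i => by simpa using hj i)⟩

lemma mul_sq_mul_sum_le_tsum {r : ℝ} (hr : (d : ℝ) < r) (j : Fin d) {θ : Fin d → ℝ}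
    {s : Finset (Fin d → ℤ)} (hs : ∀ z ∈ s, ‖z‖ * ‖θ‖ ≤ 1) :
    2 / π ^ 2 * θ j ^ 2 * ∑ z ∈ s, (z j : ℝ) ^ 2 * ‖z‖ ^ (-r) ≤
      ∑' z : Fin d → ℤ, ‖z‖ ^ (-r) * (1 - cos (∑ i, (z i : ℝ) * θ i)) := by
  have hsmall : ∀ z ∈ s, |(z j : ℝ) * θ j| ≤ π / 2 := fun z hz =>
    calc |(z j : ℝ) * θ j| ≤ ‖z‖ * ‖θ‖ := by
          rw [abs_mul]
          exact mul_le_mul (abs_intCast_apply_le_norm z j) (by simpa using norm_le_pi_norm θ j)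
            (abs_nonneg _) (norm_nonneg _)
      _ ≤ π / 2 := (hs z hz).trans (by linarith [pi_gt_three])
  calc 2 / π ^ 2 * θ j ^ 2 * ∑ z ∈ s, (z j : ℝ) ^ 2 * ‖z‖ ^ (-r)
      = ∑ z ∈ s, ‖z‖ ^ (-r) * (2 / π ^ 2 * ((z j : ℝ) * θ j) ^ 2) := by
        rw [Finset.mul_sum]; exact Finset.sum_congr rfl fun z _ => by ring
    _ ≤ ∑ z ∈ s, ‖z‖ ^ (-r) * (1 - |cos ((z j : ℝ) * θ j)|) := by
        gcongr with z hz; exact mul_sq_le_one_sub_abs_cos (hsmall z hz)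
    _ ≤ _ := sum_mul_one_sub_abs_cos_le_tsum j θ (fun z => by positivity)
          (fun z => by rw [norm_reflect]) (summable_norm_rpow_mul_one_sub_cos hr θ) s

lemma sq_norm_isLittleO_tsum_rpow_mul_one_sub_cos {r : ℝ} (hdr : (d : ℝ) < r)
    (hr : r ≤ d + 2) :
    (fun θ : Fin d → ℝ => ‖θ‖ ^ 2) =o[𝓝[≠] 0]
      fun θ => ∑' z : Fin d → ℤ, ‖z‖ ^ (-r) * (1 - cos (∑ i, (z i : ℝ) * θ i)) := by
  refine isLittleO_iff.mpr fun c hc => ?_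
  have hlarge : ∀ j, ∃ s : Finset (Fin d → ℤ),
      π ^ 2 / (2 * c) ≤ ∑ z ∈ s, (z j : ℝ) ^ 2 * ‖z‖ ^ (-r) := by
    intro j
    by_contra! h
    exact not_summable_sq_mul_norm_rpow j hr
      (summable_of_sum_le (fun z => by positivity) fun s => (h s).le)
  choose s hs using hlarge
  obtain ⟨R, hR⟩ := ((Finset.univ.biUnion s).image norm).exists_le
  have hR' : 0 < max R 1 := by positivity
  filter_upwards [nhdsWithin_le_nhds (Metric.ball_mem_nhds 0 (inv_pos.mpr hR')),
    self_mem_nhdsWithin] with θ hθR hθ0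
  obtain ⟨j, hj⟩ := exists_abs_apply_eq_norm hθ0
  have hsθ : ∀ z ∈ s j, ‖z‖ * ‖θ‖ ≤ 1 := fun z hz => by
    have hzR : ‖z‖ ≤ max R 1 := (hR _ (Finset.mem_image_of_mem _
      (Finset.mem_biUnion.mpr ⟨j, Finset.mem_univ _, hz⟩))).trans (le_max_left _ _)
    have hθ : ‖θ‖ < (max R 1)⁻¹ := by simpa using hθR
    calc ‖z‖ * ‖θ‖ ≤ max R 1 * (max R 1)⁻¹ := mul_le_mul hzR hθ.le (norm_nonneg _) hR'.le
      _ = 1 := mul_inv_cancel₀ hR'.ne'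
  calc ‖‖θ‖ ^ 2‖ = c * (2 / π ^ 2 * θ j ^ 2 * (π ^ 2 / (2 * c))) := by
        rw [← sq_abs (θ j), hj]; field_simp; simp
    _ ≤ c * (2 / π ^ 2 * θ j ^ 2 * ∑ z ∈ s j, (z j : ℝ) ^ 2 * ‖z‖ ^ (-r)) := by
        gcongr; exact hs j
    _ ≤ c * ‖∑' z : Fin d → ℤ, ‖z‖ ^ (-r) * (1 - cos (∑ i, (z i : ℝ) * θ i))‖ := by
        gcongr; exact (mul_sq_mul_sum_le_tsum hdr j hsθ).trans (le_abs_self _)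

lemma isBigO_one_sub_cos_sum_mul (z : Fin d → ℤ) (l : Filter (Fin d → ℝ)) :
    (fun θ => 1 - cos (∑ i, (z i : ℝ) * θ i)) =O[l] fun θ => ‖θ‖ ^ 2 := by
  refine IsBigO.of_bound ((∑ i, |(z i : ℝ)|) ^ 2 / 2) (Eventually.of_forall fun θ => ?_)
  set x := ∑ i, (z i : ℝ) * θ i
  rw [Real.norm_of_nonneg (by linarith [cos_le_one x]), norm_pow, norm_norm]
  calc 1 - cos x ≤ |x| ^ 2 / 2 := by
        rw [sq_abs]; linarith [one_sub_sq_div_two_le_cos (x := x)]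
    _ ≤ ((∑ i, |(z i : ℝ)|) * ‖θ‖) ^ 2 / 2 := by gcongr; exact abs_sum_intCast_mul_le z θ
    _ = (∑ i, |(z i : ℝ)|) ^ 2 / 2 * ‖θ‖ ^ 2 := by ring

lemma ite_zero_mul_one_sub_cos (c : ℝ) (z : Fin d → ℤ) (θ : Fin d → ℝ) :
    (if z = 0 then 0 else c * (1 - cos (∑ i, (z i : ℝ) * θ i))) =
      c * (1 - cos (∑ i, (z i : ℝ) * θ i)) := by
  split_ifs with hz <;> simp [hz]

end

theorem F_asymptotically_Fd_general (d : ℕ) (α : ℝ) (hα0 : 0 < α) (hα2 : α ≤ 2)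
    (a : (Fin d → ℤ) → ℝ)
    (hlim : Filter.Tendsto (fun z : Fin d → ℤ => a z * ‖z‖ ^ ((d : ℝ) + α))
      Filter.cofinite (nhds 1)) :
    Filter.Tendsto
      (fun θ : Fin d → ℝ =>
        (∑' z : Fin d → ℤ,
          if z = 0 then 0 else a z * (1 - Real.cos (∑ i, (z i : ℝ) * θ i))) /
          ∑' z : Fin d → ℤ, FdTerm d α z θ)
      (nhdsWithin 0 {(0 : Fin d → ℝ)}ᶜ) (nhds 1) := by
  set r := (d : ℝ) + α
  simp only [FdTerm, ite_zero_mul_one_sub_cos]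
  set F := fun θ : Fin d → ℝ => ∑' z : Fin d → ℤ, a z * (1 - cos (∑ i, (z i : ℝ) * θ i))
  set G := fun θ : Fin d → ℝ =>
    ∑' z : Fin d → ℤ, ‖z‖ ^ (-r) * (1 - cos (∑ i, (z i : ℝ) * θ i))
  have hφ (θ : Fin d → ℝ) (z : Fin d → ℤ) : 0 ≤ 1 - cos (∑ i, (z i : ℝ) * θ i) :=
    sub_nonneg.mpr (cos_le_one _)
  have hG : (fun θ => ‖θ‖ ^ 2) =o[𝓝[≠] 0] G :=
    sq_norm_isLittleO_tsum_rpow_mul_one_sub_cos (by linarith) (by linarith)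
  have hG0 : ∀ᶠ θ in 𝓝[≠] 0, G θ ≠ 0 := by
    filter_upwards [isLittleO_iff.mp hG one_pos, self_mem_nhdsWithin] with θ hθ hθ0 hzero
    exact hθ0 (by simpa [hzero] using hθ)
  suffices F ~[𝓝[≠] 0] G from (isEquivalent_iff_tendsto_one hG0).mp this
  refine isLittleO_iff.mpr fun ε hε => ?_
  obtain ⟨E, hE⟩ : ∃ E : Finset (Fin d → ℤ), ∀ z ∉ E,
      |a z - ‖z‖ ^ (-r)| ≤ ε / 2 * ‖z‖ ^ (-r) := by
    have := eventually_abs_sub_rpow_neg_le (by simp) hlim (half_pos hε)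
    exact ⟨(eventually_cofinite.mp this).toFinset, fun z hz => by simpa using hz⟩
  have hfin := (IsBigO.fun_sum fun z (_ : z ∈ E) =>
    (isBigO_one_sub_cos_sum_mul z _).const_mul_left |a z - ‖z‖ ^ (-r)|).trans_isLittleO hG
  filter_upwards [isLittleO_iff.mp hfin (half_pos hε)] with θ hθ
  have hGθ : 0 ≤ G θ := tsum_nonneg fun z => mul_nonneg (by positivity) (hφ θ z)
  rw [Real.norm_of_nonneg hGθ] at hθ ⊢
  calc ‖(F - G) θ‖ = |F θ - G θ| := rfl
    _ ≤ ∑ z ∈ E, |a z - ‖z‖ ^ (-r)| * (1 - cos (∑ i, (z i : ℝ) * θ i)) + ε / 2 * G θ :=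
        abs_tsum_mul_sub_tsum_mul_le E (half_pos hε).le (fun z => by positivity) (hφ θ)
          (summable_norm_rpow_mul_one_sub_cos (by linarith) θ) hE
    _ ≤ ε / 2 * G θ + ε / 2 * G θ := add_le_add_left ((le_norm_self _).trans hθ) _
    _ = ε * G θ := by ring

theorem F_asymptotically_Fd (d : ℕ) (hd : 1 ≤ d) (α : ℝ) (hα0 : 0 < α) (hα2 : α ≤ 2)
    (a : (Fin d → ℤ) → ℝ) (ha : ∀ z, 0 ≤ a z)
    (hlim : Filter.Tendsto (fun z : Fin d → ℤ => a z * ‖z‖ ^ ((d : ℝ) + α))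
      Filter.cofinite (nhds 1)) :
    Filter.Tendsto
      (fun θ : Fin d → ℝ =>
        (∑' z : Fin d → ℤ,
          if z = 0 then 0 else a z * (1 - Real.cos (∑ i, (z i : ℝ) * θ i))) /
          ∑' z : Fin d → ℤ, FdTerm d α z θ)
      (nhdsWithin 0 {(0 : Fin d → ℝ)}ᶜ) (nhds 1) :=
  F_asymptotically_Fd_general d α hα0 hα2 a hlim
end
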